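/- arXiv:2312.01541 — 2 statements merged into one kernel-verified Lean document; each statement's English description precedes it below -/
import Mathlib

section
/- The VC dimension of the class of strict equality separators on ℝ² — the class of Boolean-valued functions of the form x ↦ 1[w·x + b = 0] together with those of the form x ↦ 1[w·x + b ≠ 0], over all w ∈ ℝ² and b ∈ ℝ — is exactly 5. -/
/-!
Five points on the parabola `y = x²` are shattered: a labeling of them has at most two
positive or at most two negative points, and the secant of the parabola through two of its
points (a tangent, or a line missing it, for fewer points) meets it in exactly those points.

Six shattered points `T` are impossible. Realizing the labeling `A` of a 3-subset forces `A`
or `T \ A` to be the exact trace on `T` of a genuine line, and two such traces sharing two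
points coincide. Take a trace `L = {a, b, c}` and `d ∈ T \ L`: the trace through `a, b` is
`L ∌ d`, so `T \ {a, b, d}` is a trace, and likewise `T \ {a, c, d}`. These share the two
points of `T \ {a, b, c, d}`, hence coincide, although only the second contains `b`.
-/

/-- Dot product of two vectors in ℝ². -/
noncomputable def dotp (w x : Fin 2 → ℝ) : ℝ := ∑ i, w i * x i

/-- The class of strict equality separators on ℝ²: functions of the form
`x ↦ 1[w·x + b = 0]` together with those of the form `x ↦ 1[w·x + b ≠ 0]`. -/
def strictEqSep2 : Set ((Fin 2 → ℝ) → Prop) :=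
  {h | ∃ w : Fin 2 → ℝ, ∃ b : ℝ,
      h = (fun x => dotp w x + b = 0) ∨ h = (fun x => dotp w x + b ≠ 0)}

/-- A hypothesis class `H` shatters a finite set `S` if every labeling of `S`
is realized by some hypothesis in `H`. -/
def Shatters (H : Set ((Fin 2 → ℝ) → Prop)) (S : Finset (Fin 2 → ℝ)) : Prop :=
  ∀ f : (Fin 2 → ℝ) → Prop, ∃ h ∈ H, ∀ x ∈ S, (h x ↔ f x)

open scoped Finset

lemma dotp_eq_add (w x : Fin 2 → ℝ) : dotp w x = w 0 * x 0 + w 1 * x 1 := by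
  simp [dotp, Fin.sum_univ_two]

lemma Shatters.mono {H : Set ((Fin 2 → ℝ) → Prop)} {S T : Finset (Fin 2 → ℝ)}
    (hS : Shatters H S) (hTS : T ⊆ S) : Shatters H T := fun f =>
  let ⟨h, hH, hf⟩ := hS f
  ⟨h, hH, fun x hx => hf x (hTS hx)⟩

noncomputable def parabola (t : ℝ) : Fin 2 → ℝ := ![t, t ^ 2]

lemma parabola_injective : Function.Injective parabola := fun s t h => by
  simpa [parabola] using congrFun h 0

/-- The secant through `parabola s` and `parabola t` is `y = (s + t) x - s t`. -/
lemma secant_parabola_eq_zero_iff (s t u : ℝ) :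
    dotp ![-(s + t), 1] (parabola u) + s * t = 0 ↔ u = s ∨ u = t := by
  have h : dotp ![-(s + t), 1] (parabola u) + s * t = (u - s) * (u - t) := by
    simp only [dotp_eq_add, parabola, Matrix.cons_val_zero, Matrix.cons_val_one]
    ring
  rw [h, mul_eq_zero, sub_eq_zero, sub_eq_zero]

lemma exists_eq_or_eq_iff_mem_of_card_le_two {α : Type*} [Infinite α] (I V : Finset α)
    (hV : #V ≤ 2) : ∃ s t : α, ∀ u ∈ I, (u = s ∨ u = t ↔ u ∈ V) := by
  classical
  obtain hV0 | hV1 | hV2 : #V = 0 ∨ #V = 1 ∨ #V = 2 := by omega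
  · obtain ⟨s, hs⟩ := Infinite.exists_notMem_finset I
    refine ⟨s, s, fun u hu => ?_⟩
    simp only [Finset.card_eq_zero.mp hV0, Finset.notMem_empty, or_self, iff_false]
    rintro rfl
    exact hs hu
  · obtain ⟨a, rfl⟩ := Finset.card_eq_one.mp hV1
    exact ⟨a, a, fun u _ => by simp⟩
  · obtain ⟨a, b, -, rfl⟩ := Finset.card_eq_two.mp hV2
    exact ⟨a, b, fun u _ => by simp⟩

lemma exists_trace_parabola_eq (I V : Finset ℝ) (hV : #V ≤ 2) :
    ∃ w b, ∀ u ∈ I, (dotp w (parabola u) + b = 0 ↔ u ∈ V) := by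
  obtain ⟨s, t, hst⟩ := exists_eq_or_eq_iff_mem_of_card_le_two I V hV
  exact ⟨![-(s + t), 1], s * t, fun u hu =>
    (secant_parabola_eq_zero_iff s t u).trans (hst u hu)⟩

lemma shatters_image_parabola (I : Finset ℝ) (hI : #I ≤ 5) :
    Shatters strictEqSep2 (I.image parabola) := by
  classical
  intro f
  simp only [Finset.forall_mem_image]
  have hsplit := Finset.card_filter_add_card_filter_not (s := I) fun u => f (parabola u)
  by_cases hpos : #(I.filter fun u => f (parabola u)) ≤ 2
  · obtain ⟨w, b, hwb⟩ := exists_trace_parabola_eq I _ hpos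
    refine ⟨fun x => dotp w x + b = 0, ⟨w, b, Or.inl rfl⟩, fun u hu => ?_⟩
    simpa [hu] using hwb u hu
  · obtain ⟨w, b, hwb⟩ :=
      exists_trace_parabola_eq I (I.filter fun u => ¬f (parabola u)) (by omega)
    refine ⟨fun x => dotp w x + b ≠ 0, ⟨w, b, Or.inr rfl⟩, fun u hu => ?_⟩
    exact (by simpa [hu] using hwb u hu : _ ↔ ¬f (parabola u)).not_left

def IsLineTrace (S A : Finset (Fin 2 → ℝ)) : Prop :=
  ∃ w b, w ≠ 0 ∧ ∀ x ∈ S, (dotp w x + b = 0 ↔ x ∈ A)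

lemma isLineTrace_of_forall_iff {S A : Finset (Fin 2 → ℝ)} {w : Fin 2 → ℝ} {b : ℝ}
    (hwb : ∀ x ∈ S, (dotp w x + b = 0 ↔ x ∈ A)) (hA : A.Nonempty) (hAS : A ⊂ S) :
    IsLineTrace S A := by
  refine ⟨w, b, ?_, hwb⟩
  rintro rfl
  obtain ⟨a, ha⟩ := hA
  have hb : b = 0 := by simpa [dotp] using (hwb a (hAS.subset ha)).mpr ha
  exact hAS.ne (Finset.Subset.antisymm hAS.subset fun x hx => (hwb x hx).mp (by simp [dotp, hb]))

lemma isLineTrace_or_isLineTrace_sdiff {S A : Finset (Fin 2 → ℝ)}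
    (hS : Shatters strictEqSep2 S) (hA : A.Nonempty) (hAS : A ⊂ S) :
    IsLineTrace S A ∨ IsLineTrace S (S \ A) := by
  obtain ⟨h, ⟨w, b, rfl | rfl⟩, hh⟩ := hS (· ∈ A)
  · exact Or.inl (isLineTrace_of_forall_iff hh hA hAS)
  · refine Or.inr (isLineTrace_of_forall_iff (w := w) (b := b) (fun x hx => ?_)
      (Finset.sdiff_nonempty.mpr (not_subset_of_ssubset hAS)) (Finset.sdiff_ssubset hAS.subset hA))
    simpa [hx] using (hh x hx).not_right

/-- In the plane, the vectors orthogonal to a nonzero `w ⊥ d` are those parallel to `d ≠ 0`. -/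
lemma dotp_eq_zero_iff_cross_eq_zero {w d : Fin 2 → ℝ} (hw : w ≠ 0) (hd : d ≠ 0)
    (hwd : dotp w d = 0) (v : Fin 2 → ℝ) : dotp w v = 0 ↔ d 0 * v 1 - d 1 * v 0 = 0 := by
  have nonzero_coord : ∀ u : Fin 2 → ℝ, u ≠ 0 → u 0 ≠ 0 ∨ u 1 ≠ 0 := fun u hu => by
    by_contra! h
    exact hu (funext (Fin.forall_fin_two.mpr h))
  rw [dotp_eq_add] at hwd ⊢
  constructor
  · intro hwv
    rcases nonzero_coord w hw with h | h
    · refine (mul_eq_zero.mp ?_).resolve_left h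
      linear_combination v 1 * hwd - d 1 * hwv
    · refine (mul_eq_zero.mp ?_).resolve_left h
      linear_combination d 0 * hwv - v 0 * hwd
  · intro hcross
    rcases nonzero_coord d hd with h | h
    · refine (mul_eq_zero.mp ?_).resolve_left h
      linear_combination v 0 * hwd + w 1 * hcross
    · refine (mul_eq_zero.mp ?_).resolve_left h
      linear_combination v 1 * hwd - w 0 * hcross

lemma dotp_add_eq_zero_iff_of_common_zeros {w w' p q : Fin 2 → ℝ} {b b' : ℝ}
    (hw : w ≠ 0) (hw' : w' ≠ 0) (hpq : p ≠ q)
    (hp : dotp w p + b = 0) (hq : dotp w q + b = 0)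
    (hp' : dotp w' p + b' = 0) (hq' : dotp w' q + b' = 0) (x : Fin 2 → ℝ) :
    dotp w x + b = 0 ↔ dotp w' x + b' = 0 := by
  have through_p : ∀ {u : Fin 2 → ℝ} {c : ℝ}, dotp u p + c = 0 →
      ∀ y, (dotp u y + c = 0 ↔ dotp u (y - p) = 0) := fun {u c} hup y => by
    rw [show dotp u (y - p) = dotp u y - dotp u p from dotProduct_sub u y p]
    constructor <;> intro h <;> linarith
  have hd : q - p ≠ 0 := sub_ne_zero.mpr hpq.symm
  rw [through_p hp, through_p hp',
    dotp_eq_zero_iff_cross_eq_zero hw hd ((through_p hp q).mp hq),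
    dotp_eq_zero_iff_cross_eq_zero hw' hd ((through_p hp' q).mp hq')]

lemma IsLineTrace.eq_of_mem_of_mem {S A B : Finset (Fin 2 → ℝ)} {p q : Fin 2 → ℝ}
    (hA : IsLineTrace S A) (hB : IsLineTrace S B) (hAS : A ⊆ S) (hBS : B ⊆ S) (hpq : p ≠ q)
    (hpA : p ∈ A) (hqA : q ∈ A) (hpB : p ∈ B) (hqB : q ∈ B) : A = B := by
  obtain ⟨w, b, hw, hwA⟩ := hA
  obtain ⟨w', b', hw', hwB⟩ := hB
  have hline := dotp_add_eq_zero_iff_of_common_zeros hw hw' hpq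
    ((hwA p (hAS hpA)).mpr hpA) ((hwA q (hAS hqA)).mpr hqA)
    ((hwB p (hAS hpA)).mpr hpB) ((hwB q (hAS hqA)).mpr hqB)
  ext x
  by_cases hx : x ∈ S
  · rw [← hwA x hx, ← hwB x hx, hline]
  · exact iff_of_false (fun h => hx (hAS h)) (fun h => hx (hBS h))

lemma isLineTrace_sdiff_triple {T L : Finset (Fin 2 → ℝ)} {a b d : Fin 2 → ℝ}
    (hT : Shatters strictEqSep2 T) (hcard : 4 ≤ #T) (hL : IsLineTrace T L) (hLT : L ⊆ T)
    (ha : a ∈ L) (hb : b ∈ L) (hab : a ≠ b) (hd : d ∈ T) (hdL : d ∉ L) :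
    IsLineTrace T (T \ {a, b, d}) := by
  have hsub : {a, b, d} ⊂ T := by
    refine ⟨by simp [Finset.insert_subset_iff, hLT ha, hLT hb, hd], fun hT3 => ?_⟩
    have := (Finset.card_le_card hT3).trans Finset.card_le_three
    omega
  refine (isLineTrace_or_isLineTrace_sdiff hT (Finset.insert_nonempty _ _) hsub).resolve_left
    fun habd => hdL ?_
  rw [← habd.eq_of_mem_of_mem hL hsub.subset hLT hab (by simp) (by simp) ha hb]
  simp

lemma exists_isLineTrace_card_three {T : Finset (Fin 2 → ℝ)} (hT : Shatters strictEqSep2 T)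
    (hcard : #T = 6) : ∃ L ⊆ T, IsLineTrace T L ∧ #L = 3 ∧ #(T \ L) = 3 := by
  obtain ⟨A, hAT, hA⟩ := Finset.exists_subset_card_eq (show 3 ≤ #T by omega)
  have hAc : #(T \ A) = 3 := by rw [Finset.card_sdiff_of_subset hAT]; omega
  have hAT' : A ⊂ T := hAT.ssubset_of_ne (by rintro rfl; omega)
  rcases isLineTrace_or_isLineTrace_sdiff hT (Finset.card_pos.mp (by omega)) hAT' with h | h
  · exact ⟨A, hAT, h, hA, hAc⟩
  · exact ⟨T \ A, Finset.sdiff_subset, h, hAc, by rwa [Finset.sdiff_sdiff_eq_self hAT]⟩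

lemma not_shatters_of_card_eq_six {T : Finset (Fin 2 → ℝ)} (hcard : #T = 6) :
    ¬Shatters strictEqSep2 T := by
  intro hT
  obtain ⟨L, hLT, hL, hL3, hLc⟩ := exists_isLineTrace_card_three hT hcard
  obtain ⟨a, b, c, hab, hac, hbc, rfl⟩ := Finset.card_eq_three.mp hL3
  obtain ⟨d, e, f, hde, hdf, hef, hdef⟩ := Finset.card_eq_three.mp hLc
  have mem_compl : ∀ x ∈ ({d, e, f} : Finset _), x ∈ T ∧ x ≠ a ∧ x ≠ b ∧ x ≠ c := by
    intro x hx
    rw [← hdef] at hx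
    simp only [Finset.mem_sdiff, Finset.mem_insert, Finset.mem_singleton, not_or] at hx
    exact hx
  obtain ⟨hdT, hda, hdb, hdc⟩ := mem_compl d (by simp)
  obtain ⟨heT, hea, heb, hec⟩ := mem_compl e (by simp)
  obtain ⟨hfT, hfa, hfb, hfc⟩ := mem_compl f (by simp)
  have hdL : d ∉ ({a, b, c} : Finset _) := by simp [hda, hdb, hdc]
  have h₁ := isLineTrace_sdiff_triple hT (by omega) hL hLT (by simp) (by simp) hab hdT hdL
  have h₂ := isLineTrace_sdiff_triple hT (by omega) hL hLT (by simp) (by simp) hac hdT hdL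
  have heq := h₁.eq_of_mem_of_mem h₂ Finset.sdiff_subset Finset.sdiff_subset hef
    (by simp [heT, hea, heb, hde.symm]) (by simp [hfT, hfa, hfb, hdf.symm])
    (by simp [heT, hea, hec, hde.symm]) (by simp [hfT, hfa, hfc, hdf.symm])
  have hb : b ∈ T \ {a, c, d} := by simp [hLT (by simp : b ∈ _), hab.symm, hbc, hdb.symm]
  simp [← heq] at hb

/-- The VC dimension of the strict equality separator class on ℝ² is exactly 5:
some set of 5 points is shattered, and no shattered set has more than 5 points. -/
theorem vc_dim_strict_equality_separators_R2 :
    (∃ S : Finset (Fin 2 → ℝ), S.card = 5 ∧ Shatters strictEqSep2 S) ∧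
    (∀ S : Finset (Fin 2 → ℝ), Shatters strictEqSep2 S → S.card ≤ 5) := by
  set I : Finset ℝ := (Finset.range 5).image Nat.cast
  have hI : #I = 5 := by
    rw [Finset.card_image_of_injective _ Nat.cast_injective, Finset.card_range]
  refine ⟨⟨I.image parabola, ?_, shatters_image_parabola I hI.le⟩, fun S hS => ?_⟩
  · rw [Finset.card_image_of_injective _ parabola_injective, hI]
  · by_contra! hS6
    obtain ⟨T, hTS, hT⟩ := Finset.exists_subset_card_eq (show 6 ≤ #S by omega)
    exact not_shatters_of_card_eq_six hT (hS.mono hTS)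
end

section
/- Any set of 5 distinct points in ℝ² with no three of the points collinear is shattered by the class of strict equality separators: for every labeling of the 5 points by {0,1} there is a function of the form x ↦ 1[w·x + b = 0] or x ↦ 1[w·x + b ≠ 0] (w ∈ ℝ², w ≠ 0, b ∈ ℝ) realizing that labeling on the 5 points. -/
lemma dotp_vecCons (a c : ℝ) (x : Fin 2 → ℝ) : dotp ![a, c] x = a * x 0 + c * x 1 := by
  simp [dotp, Fin.sum_univ_two]

lemma vecCons_ne_zero_of_left_ne_zero {a : ℝ} (c : ℝ) (ha : a ≠ 0) : ![a, c] ≠ 0 :=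
  fun h => ha (by simpa using congrFun h 0)

lemma fin_two_ext_iff {α : Type*} {x y : Fin 2 → α} : x = y ↔ x 0 = y 0 ∧ x 1 = y 1 := by
  simp [funext_iff, Fin.forall_fin_two]

lemma collinear_of_cross_eq_zero {p q r : Fin 2 → ℝ}
    (h : (q 0 - p 0) * (r 1 - p 1) = (q 1 - p 1) * (r 0 - p 0)) :
    Collinear ℝ ({p, q, r} : Set (Fin 2 → ℝ)) := by
  rcases eq_or_ne q p with rfl | hqp
  · simpa using collinear_pair ℝ q r
  have hu : (q 0 - p 0) ^ 2 + (q 1 - p 1) ^ 2 ≠ 0 := by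
    intro h0
    refine hqp (fin_two_ext_iff.2 ⟨?_, ?_⟩) <;>
      nlinarith [sq_nonneg (q 0 - p 0), sq_nonneg (q 1 - p 1)]
  -- as the cross product vanishes, `r - p` is its own projection `t • (q - p)`
  set t := ((q 0 - p 0) * (r 0 - p 0) + (q 1 - p 1) * (r 1 - p 1)) /
    ((q 0 - p 0) ^ 2 + (q 1 - p 1) ^ 2)
  rw [collinear_iff_of_mem (Set.mem_insert p _)]
  refine ⟨q - p, ?_⟩
  rintro x (rfl | rfl | rfl)
  · exact ⟨0, by simp⟩
  · exact ⟨1, by simp⟩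
  · refine ⟨t, fin_two_ext_iff.2 ⟨?_, ?_⟩⟩ <;>
      simp only [t, vadd_eq_add, Pi.add_apply, Pi.smul_apply, Pi.sub_apply, smul_eq_mul] <;>
      field_simp
    · linear_combination (p 1 - q 1) * h
    · linear_combination (q 0 - p 0) * h

lemma exists_line_inter_eq_singleton (S : Finset (Fin 2 → ℝ)) (p : Fin 2 → ℝ) :
    ∃ w : Fin 2 → ℝ, w ≠ 0 ∧ ∃ b : ℝ, ∀ x ∈ S, (dotp w x + b = 0 ↔ x = p) := by
  -- a slope avoiding the lines through `p` and the other points of `S`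
  obtain ⟨t, ht⟩ := Infinite.exists_notMem_finset (S.image fun x => -(x 0 - p 0) / (x 1 - p 1))
  refine ⟨![1, t], vecCons_ne_zero_of_left_ne_zero t one_ne_zero, -(p 0 + t * p 1),
    fun x hx => ?_⟩
  simp only [dotp_vecCons, one_mul]
  refine ⟨fun hline => ?_, fun hxp => by rw [hxp]; ring⟩
  rcases eq_or_ne (x 1) (p 1) with h1 | h1
  · exact fin_two_ext_iff.2 ⟨by rw [h1] at hline; linarith, h1⟩
  · refine absurd (Finset.mem_image.2 ⟨x, hx, ?_⟩) ht
    field_simp [sub_ne_zero.2 h1]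
    linarith

lemma exists_line_inter_eq_empty (S : Finset (Fin 2 → ℝ)) :
    ∃ w : Fin 2 → ℝ, w ≠ 0 ∧ ∃ b : ℝ, ∀ x ∈ S, dotp w x + b ≠ 0 := by
  obtain ⟨p, hp⟩ := Infinite.exists_notMem_finset S
  obtain ⟨w, hw, b, hline⟩ := exists_line_inter_eq_singleton S p
  exact ⟨w, hw, b, fun x hx hx0 => hp ((hline x hx).1 hx0 ▸ hx)⟩

lemma exists_line_inter_eq_pair (S : Finset (Fin 2 → ℝ)) {p q : Fin 2 → ℝ} (hpq : p ≠ q)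
    (hS : ∀ x ∈ S, x ≠ p → x ≠ q → ¬ Collinear ℝ ({p, q, x} : Set (Fin 2 → ℝ))) :
    ∃ w : Fin 2 → ℝ, w ≠ 0 ∧ ∃ b : ℝ,
      ∀ x ∈ S, (dotp w x + b = 0 ↔ x = p ∨ x = q) := by
  have hw : ![q 1 - p 1, p 0 - q 0] ≠ 0 := by
    intro h
    have h0 := congrFun h 0
    have h1 := congrFun h 1
    simp only [Matrix.cons_val_zero, Matrix.cons_val_one, Pi.zero_apply, sub_eq_zero] at h0 h1
    exact hpq (fin_two_ext_iff.2 ⟨h1, h0.symm⟩)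
  refine ⟨_, hw, -((q 1 - p 1) * p 0 + (p 0 - q 0) * p 1), fun x hx => ?_⟩
  simp only [dotp_vecCons]
  refine ⟨fun hline => ?_, by rintro (rfl | rfl) <;> ring⟩
  by_contra hxpq
  obtain ⟨hxp, hxq⟩ := not_or.1 hxpq
  exact hS x hx hxp hxq (collinear_of_cross_eq_zero (by linarith))

lemma exists_line_inter_eq_of_card_le_two {S T : Finset (Fin 2 → ℝ)}
    (hS : ∀ a ∈ S, ∀ b ∈ S, ∀ c ∈ S, a ≠ b → a ≠ c → b ≠ c →
      ¬ Collinear ℝ ({a, b, c} : Set (Fin 2 → ℝ)))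
    (hTS : T ⊆ S) (hT : T.card ≤ 2) :
    ∃ w : Fin 2 → ℝ, w ≠ 0 ∧ ∃ b : ℝ,
      ∀ x ∈ S, (dotp w x + b = 0 ↔ x ∈ T) := by
  interval_cases h : T.card
  · obtain ⟨w, hw, b, hline⟩ := exists_line_inter_eq_empty S
    simpa [Finset.card_eq_zero.1 h] using ⟨w, hw, b, hline⟩
  · obtain ⟨p, rfl⟩ := Finset.card_eq_one.1 h
    simpa using exists_line_inter_eq_singleton S p
  · obtain ⟨p, q, hpq, rfl⟩ := Finset.card_eq_two.1 h
    have hp : p ∈ S := hTS (by simp)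
    have hq : q ∈ S := hTS (by simp)
    simpa using exists_line_inter_eq_pair S hpq fun x hx hxp hxq =>
      hS p hp q hq x hx hpq (Ne.symm hxp) (Ne.symm hxq)

/-- Any 5 distinct points in ℝ² with no three collinear are shattered by the class of
strict equality separators: every labeling of the 5 points is realized either by a
hypothesis `x ↦ 1[w·x + b = 0]` or by a hypothesis `x ↦ 1[w·x + b ≠ 0]` with `w ≠ 0`. -/
theorem five_points_no_three_collinear_shattered
    (S : Finset (Fin 2 → ℝ)) (hcard : S.card = 5)
    (hgen : ∀ a ∈ S, ∀ b ∈ S, ∀ c ∈ S, a ≠ b → a ≠ c → b ≠ c →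
      ¬ Collinear ℝ ({a, b, c} : Set (Fin 2 → ℝ))) :
    ∀ f : (Fin 2 → ℝ) → Prop,
      ∃ w : Fin 2 → ℝ, w ≠ 0 ∧ ∃ b : ℝ,
        (∀ x ∈ S, (dotp w x + b = 0 ↔ f x)) ∨
        (∀ x ∈ S, (dotp w x + b ≠ 0 ↔ f x)) := by
  intro f
  classical
  have hsplit := S.card_filter_add_card_filter_not f
  by_cases hsmall : (S.filter f).card ≤ 2
  · obtain ⟨w, hw, b, hline⟩ :=
      exists_line_inter_eq_of_card_le_two hgen (S.filter_subset f) hsmall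
    exact ⟨w, hw, b, Or.inl fun x hx => by simpa [hx] using hline x hx⟩
  · obtain ⟨w, hw, b, hline⟩ :=
      exists_line_inter_eq_of_card_le_two hgen (S.filter_subset (¬ f ·)) (by omega)
    exact ⟨w, hw, b, Or.inr fun x hx => by simpa [hx] using (hline x hx).not⟩
end
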